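/- arXiv:1510.08422 — 2 statements merged into one kernel-verified Lean document; each statement's English description precedes it below -/
import Mathlib

section
/- Let $t^* \in \mathbb{R}$ and let $F : \{(r,t) : t^* \le t \le r\} \to [0,\infty)$ be continuous and satisfy, for some constants $C_0 > 0$ and $p$ with $1 < p < 1+\sqrt{2}$, both (i) $F(r,t) \ge C_0 r^{1-p}$ and (ii) $F(r,t) \ge \frac{1}{4(r-t)}\int_{t}^{r}\int_{t^*}^{t} (\alpha-\beta) F(\alpha,\beta)^p \, d\beta\, d\alpha$ for all $t^* \le t < r$, with $t^* > 0$. Then no such $F$ exists. -/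
/-!
Starting from `F(r,t) ≥ C₀ r^(1-p)` and feeding each lower bound into the integral inequality
gives, by induction, `F(r,t) ≥ ε_k (t - t*)^(A_k) r^(-B_k)` with `A_{k+1} = p A_k + 2` and
`B_{k+1} = p B_k`, i.e. `A_k = 2(p^k - 1)/(p - 1)` and `B_k = (p - 1) p^k`, while the constants
only lose a factor polynomial in `p^k` per step, so `ε_k ≥ exp(-S p^k)`. At `t = r/2` the bound
is `exp(p^k (2/(p-1) - (p-1)) log r + O(p^k))`, and `2/(p-1) > p - 1` is exactly `p < 1 + √2`:
for `r` large the bounds tend to infinity with `k`.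
-/

open intervalIntegral Real Set Filter Function

theorem continuousOn_parametric_intervalIntegral_of_continuousOn {X : Type*} [MetricSpace X]
    {f : X → ℝ → ℝ} {s : Set X} (hs : IsClosed s) {a b : ℝ}
    (hf : ContinuousOn (uncurry f) (s ×ˢ uIcc a b)) :
    ContinuousOn (fun x => ∫ t in a..b, f x t) s := by
  obtain ⟨g, hg⟩ := ContinuousMap.exists_restrict_eq (hs.prod isClosed_Icc) ⟨_, hf.domRestrict⟩
  have hgf : ∀ x ∈ s, ∀ t ∈ uIcc a b, g (x, t) = f x t := fun x hx t ht =>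
    DFunLike.congr_fun hg ⟨(x, t), hx, ht⟩
  have hcont : Continuous fun x => ∫ t in a..b, g (x, t) :=
    continuous_parametric_intervalIntegral_of_continuous' (f := fun x t => g (x, t))
      (map_continuous g) a b
  exact hcont.continuousOn.congr fun x hx => integral_congr fun t ht => (hgf x hx t ht).symm

theorem integral_sub_mul_rpow_sub {u v q : ℝ} (huv : u ≤ v) (hq : 0 ≤ q) :
    ∫ β in u..v, (v - β) * (β - u) ^ q = (v - u) ^ (q + 2) / ((q + 1) * (q + 2)) := by
  have hshift : ∫ β in u..v, (v - β) * (β - u) ^ q = ∫ x in 0..v - u, (v - u - x) * x ^ q := by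
    simpa only [sub_sub_sub_cancel_right, sub_self] using
      integral_comp_sub_right (fun x => (v - u - x) * x ^ q) u (a := u) (b := v)
  generalize hL : v - u = L at hshift
  have hL0 : 0 ≤ L := hL ▸ sub_nonneg.2 huv
  have hsplit : ∀ x ∈ uIcc 0 L, (L - x) * x ^ q = L * x ^ q - x ^ (q + 1) := by
    intro x hx
    rw [uIcc_of_le hL0] at hx
    rw [rpow_add_one' hx.1 (by positivity)]
    ring
  have hL2 : L ^ (q + 2) = L * L ^ (q + 1) := by
    rw [show q + 2 = q + 1 + 1 by ring, rpow_add_one' hL0 (by positivity)]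
    ring
  rw [hshift, integral_congr hsplit, integral_sub, integral_const_mul,
    integral_rpow (Or.inl (by linarith)), integral_rpow (Or.inl (by linarith)),
    zero_rpow (by positivity), zero_rpow (by positivity), show q + 1 + 1 = q + 2 by ring, hL2]
  · field_simp
    ring
  all_goals
    exact (Continuous.intervalIntegrable (by fun_prop (disch := positivity)) _ _)

def wedge (a : ℝ) : Set (ℝ × ℝ) := {z | a ≤ z.2 ∧ z.2 ≤ z.1}

def PowerLowerBound (F : ℝ → ℝ → ℝ) (a ε A B : ℝ) : Prop :=
  ∀ r t, a ≤ t → t < r → ε * (t - a) ^ A * r ^ (-B) ≤ F r t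

section Iteration

variable {F : ℝ → ℝ → ℝ} {a p ε A B : ℝ}

theorem PowerLowerBound.mono {ε' : ℝ} (h : PowerLowerBound F a ε A B) (hε : ε' ≤ ε)
    (ha : 0 ≤ a) : PowerLowerBound F a ε' A B := fun r t hat htr =>
  le_trans (by gcongr; exact rpow_nonneg (by linarith) _) (h r t hat htr)

theorem intervalIntegrable_wedge_slice (hF : ContinuousOn (uncurry F) (wedge a)) (hp : 0 ≤ p)
    {t α : ℝ} (hat : a ≤ t) (htα : t ≤ α) :
    IntervalIntegrable (fun β => (α - β) * F α β ^ p) MeasureTheory.volume a t := by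
  refine ContinuousOn.intervalIntegrable ?_
  rw [uIcc_of_le hat]
  have hslice : ContinuousOn (F α) (Icc a t) :=
    hF.comp (continuousOn_const.prodMk continuousOn_id) fun β hβ => ⟨hβ.1, hβ.2.trans htα⟩
  exact (continuousOn_const.sub continuousOn_id).mul (hslice.rpow_const fun _ _ => Or.inr hp)

theorem intervalIntegrable_wedge_integral (hF : ContinuousOn (uncurry F) (wedge a)) (hp : 0 ≤ p)
    {t r : ℝ} (hat : a ≤ t) (htr : t ≤ r) :
    IntervalIntegrable (fun α => ∫ β in a..t, (α - β) * F α β ^ p) MeasureTheory.volume t r := by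
  refine ContinuousOn.intervalIntegrable ?_
  rw [uIcc_of_le htr]
  refine continuousOn_parametric_intervalIntegral_of_continuousOn isClosed_Icc ?_
  have hrect : ContinuousOn (uncurry F) (Icc t r ×ˢ uIcc a t) := by
    refine hF.mono fun z hz => ?_
    rw [mem_prod, uIcc_of_le hat] at hz
    exact ⟨hz.2.1, hz.2.2.trans hz.1.1⟩
  exact (continuousOn_fst.sub continuousOn_snd).mul (hrect.rpow_const fun _ _ => Or.inr hp)

theorem PowerLowerBound.le_integral (h : PowerLowerBound F a ε A B)
    (hF : ContinuousOn (uncurry F) (wedge a)) (ha : 0 ≤ a) (hp : 0 ≤ p) (hε : 0 ≤ ε)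
    (hA : 0 ≤ A) {t α : ℝ} (hat : a ≤ t) (htα : t < α) :
    ε ^ p * ((t - a) ^ (p * A + 2) / ((p * A + 1) * (p * A + 2))) * α ^ (-(p * B)) ≤
      ∫ β in a..t, (α - β) * F α β ^ p := by
  have hα : 0 < α := by linarith
  have hpoint : ∀ β ∈ Ioo a t,
      ε ^ p * α ^ (-(p * B)) * ((t - β) * (β - a) ^ (p * A)) ≤ (α - β) * F α β ^ p := by
    intro β hβ
    have hβa : 0 ≤ β - a := sub_nonneg.2 hβ.1.le
    have hbound := rpow_le_rpow (by positivity) (h α β hβ.1.le (hβ.2.trans htα)) hp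
    rw [mul_rpow (by positivity) (by positivity), mul_rpow hε (by positivity),
      ← rpow_mul hβa, ← rpow_mul hα.le] at hbound
    calc ε ^ p * α ^ (-(p * B)) * ((t - β) * (β - a) ^ (p * A))
        = (t - β) * (ε ^ p * (β - a) ^ (A * p) * α ^ (-B * p)) := by ring_nf
      _ ≤ (α - β) * F α β ^ p := by
        gcongr
        linarith [hβ.2]
  have hlower : IntervalIntegrable
      (fun β => ε ^ p * α ^ (-(p * B)) * ((t - β) * (β - a) ^ (p * A))) MeasureTheory.volume a t :=
    Continuous.intervalIntegrable (by fun_prop (disch := positivity)) _ _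
  have hmono := integral_mono_on_of_le_Ioo hat hlower
    (intervalIntegrable_wedge_slice hF hp hat htα.le) hpoint
  rwa [integral_const_mul, integral_sub_mul_rpow_sub hat (by positivity), mul_right_comm] at hmono

theorem PowerLowerBound.step (h : PowerLowerBound F a ε A B)
    (hF : ContinuousOn (uncurry F) (wedge a))
    (hint : ∀ r t, a ≤ t → t < r →
      (1 / (4 * (r - t))) * ∫ α in t..r, ∫ β in a..t, (α - β) * F α β ^ p ≤ F r t)
    (ha : 0 ≤ a) (hp : 0 ≤ p) (hε : 0 ≤ ε) (hA : 0 ≤ A) (hB : 0 ≤ B) :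
    PowerLowerBound F a (ε ^ p / (4 * (p * A + 1) * (p * A + 2))) (p * A + 2) (p * B) := by
  intro r t hat htr
  set K := ε ^ p * ((t - a) ^ (p * A + 2) / ((p * A + 1) * (p * A + 2))) * r ^ (-(p * B))
  have hK : (r - t) * K ≤ ∫ α in t..r, ∫ β in a..t, (α - β) * F α β ^ p := by
    rw [← smul_eq_mul, ← integral_const]
    refine integral_mono_on_of_le_Ioo htr.le intervalIntegrable_const
      (intervalIntegrable_wedge_integral hF hp hat htr.le) fun α hα => ?_
    refine le_trans ?_ (h.le_integral hF ha hp hε hA hat hα.1)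
    have hr : r ^ (-(p * B)) ≤ α ^ (-(p * B)) :=
      rpow_le_rpow_of_nonpos (ha.trans_lt (hat.trans_lt hα.1)) hα.2.le
        (neg_nonpos.2 (mul_nonneg hp hB))
    exact mul_le_mul_of_nonneg_left hr (by positivity)
  calc ε ^ p / (4 * (p * A + 1) * (p * A + 2)) * (t - a) ^ (p * A + 2) * r ^ (-(p * B))
      = 1 / (4 * (r - t)) * ((r - t) * K) := by
        have : r - t ≠ 0 := by linarith
        simp only [K]
        field_simp
    _ ≤ F r t := le_trans (by gcongr) (hint r t hat htr)

end Iteration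

section Exponents

variable {p : ℝ}

noncomputable def distExponent (p : ℝ) (k : ℕ) : ℝ := 2 * (p ^ k - 1) / (p - 1)

def decayExponent (p : ℝ) (k : ℕ) : ℝ := (p - 1) * p ^ k

theorem distExponent_succ (hp : p ≠ 1) (k : ℕ) :
    distExponent p (k + 1) = p * distExponent p k + 2 := by
  have : p - 1 ≠ 0 := sub_ne_zero.2 hp
  simp only [distExponent]
  field_simp
  ring

theorem decayExponent_succ (k : ℕ) : decayExponent p (k + 1) = p * decayExponent p k := by
  simp only [decayExponent]
  ring

theorem distExponent_nonneg (hp : 1 < p) (k : ℕ) : 0 ≤ distExponent p k :=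
  div_nonneg (by linarith [one_le_pow₀ (n := k) hp.le]) (by linarith)

theorem decayExponent_nonneg (hp : 1 ≤ p) (k : ℕ) : 0 ≤ decayExponent p k :=
  mul_nonneg (by linarith) (by positivity)

theorem four_mul_distExponent_le (hp : 1 < p) (k : ℕ) :
    4 * (p * distExponent p k + 1) * (p * distExponent p k + 2) ≤
      16 * p ^ 2 / (p - 1) ^ 2 * (p ^ k) ^ 2 := by
  have hp1 : 0 < p - 1 := by linarith
  have hA := distExponent_nonneg hp k
  have hnext : p * distExponent p k + 2 ≤ 2 * p ^ (k + 1) / (p - 1) := by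
    rw [← distExponent_succ hp.ne', distExponent]
    gcongr
    linarith
  calc 4 * (p * distExponent p k + 1) * (p * distExponent p k + 2)
      ≤ 4 * (2 * p ^ (k + 1) / (p - 1)) * (2 * p ^ (k + 1) / (p - 1)) := by
        gcongr
        linarith
    _ = 16 * p ^ 2 / (p - 1) ^ 2 * (p ^ k) ^ 2 := by
        field_simp
        ring

end Exponents

/-- The shift `2 / (p - 1)` makes `p log ε_k - log ε_{k+1} = T (1 + k (p - 1))`, which absorbs the
constant lost in one iteration step (`four_mul_distExponent_le`). -/
noncomputable def lowerCoeff (p T S : ℝ) (k : ℕ) : ℝ := exp (T * (k + 2 / (p - 1)) - S * p ^ k)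

theorem lowerCoeff_succ_le {p T : ℝ} (hp : 1 < p) (hTQ : log (16 * p ^ 2 / (p - 1) ^ 2) ≤ T)
    (hTp : 2 * log p ≤ T * (p - 1)) (S : ℝ) (k : ℕ) :
    lowerCoeff p T S (k + 1) ≤
      lowerCoeff p T S k ^ p / (4 * (p * distExponent p k + 1) * (p * distExponent p k + 2)) := by
  have hp1 : 0 < p - 1 := by linarith
  have hA := distExponent_nonneg hp k
  have hc : 4 * (p * distExponent p k + 1) * (p * distExponent p k + 2) ≤
      exp (T * (1 + k * (p - 1))) := by
    refine (four_mul_distExponent_le hp k).trans ?_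
    rw [← exp_log (by positivity : 0 < 16 * p ^ 2 / (p - 1) ^ 2 * (p ^ k) ^ 2)]
    gcongr
    rw [log_mul (by positivity) (by positivity), log_pow, log_pow]
    push_cast
    nlinarith [mul_le_mul_of_nonneg_left hTp (Nat.cast_nonneg k : (0:ℝ) ≤ k)]
  rw [le_div_iff₀ (by positivity)]
  calc lowerCoeff p T S (k + 1) * (4 * (p * distExponent p k + 1) * (p * distExponent p k + 2))
      ≤ lowerCoeff p T S (k + 1) * exp (T * (1 + k * (p - 1))) := by
        gcongr
        exact (exp_pos _).le
    _ = lowerCoeff p T S k ^ p := by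
        simp only [lowerCoeff]
        rw [← exp_add, ← exp_mul]
        congr 1
        push_cast
        field_simp
        ring

theorem exists_powerLowerBound_forall {F : ℝ → ℝ → ℝ} {a p C0 : ℝ}
    (hF : ContinuousOn (uncurry F) (wedge a))
    (hint : ∀ r t, a ≤ t → t < r →
      (1 / (4 * (r - t))) * ∫ α in t..r, ∫ β in a..t, (α - β) * F α β ^ p ≤ F r t)
    (hlow : PowerLowerBound F a C0 0 (p - 1)) (ha : 0 ≤ a) (hp : 1 < p) (hC0 : 0 < C0) :
    ∃ S : ℝ, ∀ k : ℕ,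
      PowerLowerBound F a (exp (-S * p ^ k)) (distExponent p k) (decayExponent p k) := by
  have hp1 : 0 < p - 1 := by linarith
  set T := max (log (16 * p ^ 2 / (p - 1) ^ 2)) (2 * log p / (p - 1))
  have hT : 0 ≤ T := le_max_of_le_right (by have := log_pos hp; positivity)
  have hTp : 2 * log p ≤ T * (p - 1) := (div_le_iff₀ hp1).1 (le_max_right _ _)
  set S := T * (2 / (p - 1)) - log C0
  have hbound : ∀ k : ℕ,
      PowerLowerBound F a (lowerCoeff p T S k) (distExponent p k) (decayExponent p k) := by
    intro k
    induction k with
    | zero =>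
      have hC : lowerCoeff p T S 0 = C0 := by simp [lowerCoeff, S, exp_log hC0]
      simpa [hC, distExponent, decayExponent] using hlow
    | succ k ih =>
      rw [distExponent_succ hp.ne', decayExponent_succ]
      exact (ih.step hF hint ha (by linarith) (exp_pos _).le (distExponent_nonneg hp k)
        (decayExponent_nonneg hp.le k)).mono (lowerCoeff_succ_le hp (le_max_left _ _) hTp S k) ha
  refine ⟨S, fun k => (hbound k).mono ?_ ha⟩
  have : 0 ≤ T * (k + 2 / (p - 1)) := by positivity
  simp only [lowerCoeff]
  gcongr
  linarith

theorem exists_growth_point {a p : ℝ} (hp : 1 < p) (hp2 : (p - 1) ^ 2 < 2)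
    (S : ℝ) : ∃ r t, a < t ∧ t < r ∧ 0 < -S + 2 / (p - 1) * log (t - a) - (p - 1) * log r := by
  have hp1 : 0 < p - 1 := by linarith
  have hd : 0 < 2 / (p - 1) - (p - 1) := by
    rw [sub_pos, lt_div_iff₀ hp1]
    nlinarith
  obtain ⟨r, hra, hr0, hr⟩ := ((eventually_ge_atTop (4 * a)).and ((eventually_gt_atTop 0).and
    ((tendsto_log_atTop.const_mul_atTop hd).eventually_gt_atTop
      (S + 2 / (p - 1) * log 4)))).exists
  refine ⟨r, r / 2, by linarith, by linarith, ?_⟩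
  have hlog : log r - log 4 ≤ log (r / 2 - a) := by
    rw [← log_div hr0.ne' (by norm_num)]
    exact log_le_log (by positivity) (by linarith)
  nlinarith [mul_le_mul_of_nonneg_left hlog (by positivity : (0:ℝ) ≤ 2 / (p - 1))]

theorem not_forall_powerLowerBound {F : ℝ → ℝ → ℝ} {a p : ℝ} (ha : 0 ≤ a) (hp : 1 < p)
    (hp2 : (p - 1) ^ 2 < 2) (S : ℝ) :
    ¬ ∀ k : ℕ, PowerLowerBound F a (exp (-S * p ^ k)) (distExponent p k) (decayExponent p k) := by
  intro h
  obtain ⟨r, t, hat, htr, hc⟩ := exists_growth_point hp hp2 S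
  set c := -S + 2 / (p - 1) * log (t - a) - (p - 1) * log r
  have hp1 : p - 1 ≠ 0 := by linarith
  have hval : ∀ k : ℕ,
      exp (-S * p ^ k) * (t - a) ^ distExponent p k * r ^ (-decayExponent p k) =
        exp (p ^ k * c - 2 / (p - 1) * log (t - a)) := by
    intro k
    rw [rpow_def_of_pos (sub_pos.2 hat), rpow_def_of_pos (by linarith), ← exp_add, ← exp_add]
    congr 1
    simp only [distExponent, decayExponent, c]
    field_simp
    ring
  have hlim : Tendsto (fun k : ℕ => exp (p ^ k * c - 2 / (p - 1) * log (t - a))) atTop atTop :=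
    tendsto_exp_atTop.comp (tendsto_atTop_add_const_right _ _
      ((tendsto_pow_atTop_atTop_of_one_lt hp).atTop_mul_const hc))
  obtain ⟨k, hk⟩ := (hlim.eventually_gt_atTop (F r t)).exists
  linarith [hval k ▸ h k r t hat.le htr]

theorem stmt_11_general (tstar C0 p : ℝ) (htstar : 0 < tstar) (hC0 : 0 < C0)
    (hp1 : 1 < p) (hp2 : p < 1 + Real.sqrt 2) (F : ℝ → ℝ → ℝ)
    (hcont : ContinuousOn (fun z : ℝ × ℝ => F z.1 z.2)
      {z : ℝ × ℝ | tstar ≤ z.2 ∧ z.2 ≤ z.1})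
    (hlow : ∀ r t, tstar ≤ t → t < r → F r t ≥ C0 * r ^ (1 - p))
    (hint : ∀ r t, tstar ≤ t → t < r →
      F r t ≥ (1 / (4 * (r - t))) *
        ∫ α in t..r, ∫ β in tstar..t, (α - β) * F α β ^ p) :
    False := by
  have hsq : (p - 1) ^ 2 < 2 := by
    nlinarith [sq_sqrt (show (0:ℝ) ≤ 2 by norm_num), sqrt_nonneg 2]
  have hbase : PowerLowerBound F tstar C0 0 (p - 1) := fun r t hat htr => by
    simpa using hlow r t hat htr
  obtain ⟨S, hS⟩ := exists_powerLowerBound_forall hcont hint hbase htstar.le hp1 hC0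
  exact not_forall_powerLowerBound htstar.le hp1 hsq S hS

theorem stmt_11 (tstar C0 p : ℝ) (htstar : 0 < tstar) (hC0 : 0 < C0)
    (hp1 : 1 < p) (hp2 : p < 1 + Real.sqrt 2) (F : ℝ → ℝ → ℝ)
    (hcont : ContinuousOn (fun z : ℝ × ℝ => F z.1 z.2)
      {z : ℝ × ℝ | tstar ≤ z.2 ∧ z.2 ≤ z.1})
    (hnonneg : ∀ r t, tstar ≤ t → t ≤ r → 0 ≤ F r t)
    (hlow : ∀ r t, tstar ≤ t → t < r → F r t ≥ C0 * r ^ (1 - p))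
    (hint : ∀ r t, tstar ≤ t → t < r →
      F r t ≥ (1 / (4 * (r - t))) *
        ∫ α in t..r, ∫ β in tstar..t, (α - β) * F α β ^ p) :
    False :=
  stmt_11_general tstar C0 p htstar hC0 hp1 hp2 F hcont hlow hint
end

section
/- Let $t^* > 0$, $1 < p < 1+\sqrt{2}$, $C_0 > 0$, and let $\bar u$ be a continuous nonnegative function on $\Sigma = \{(r,t): 0 \le r \le t - t^*\}$ satisfying $\bar u(r,t) \ge C_0 (t+r)^{1-p}$ and $\bar u(r,t) \ge \iint_{B_{r,t}} \frac{\lambda}{2r} \bar u(\lambda,s)^p \, d\lambda\, ds$ for all $(r,t) \in \Sigma$ with $r > 0$, where $B_{r,t} = \{(\lambda,s) : t-r \le \lambda+s \le t+r,\ t^* \le s-\lambda \le t-r\}$. Then no such function $\bar u$ exists. -/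
/-!
In the null coordinates `α = t + r`, `β = t - r`, with `F u v = ū ((u - v) / 2) ((u + v) / 2)`, the
region `B_{r,t}` becomes the rectangle `[v, u] × [t*, v]` and the hypotheses read
`F u v ≥ C₀ u^(1-p)` and `F u v ≥ (4 (u - v))⁻¹ ∬ (α - β) F(α, β)^p`. Feeding a lower bound
`F u v ≥ D_k u^(-(p-1) p^k) (v - t*)^(b_k)` into the integral inequality, with `α - β ≥ v - β` and
`α ≤ u`, gives the same bound for `k + 1` with `b_{k+1} = p b_k + 2` and
`D_{k+1} = D_k^p / (4 (p b_k + 1) (p b_k + 2))`. As `log D_k ≥ A p^k`, at `v - t* = u / 4` the bound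
grows like `exp (γ p^k)`, and `γ > 0` for large `u` exactly because `(p - 1)^2 < 2`.
-/

open MeasureTheory Set Filter

noncomputable def fromNullCoord : ℝ × ℝ →L[ℝ] ℝ × ℝ :=
  LinearMap.toContinuousLinearMap <|
    Matrix.toLin (Module.Basis.finTwoProd ℝ) (Module.Basis.finTwoProd ℝ) !![1/2, -(1/2); 1/2, 1/2]

lemma fromNullCoord_apply (q : ℝ × ℝ) : fromNullCoord q = ((q.1 - q.2) / 2, (q.1 + q.2) / 2) := by
  rw [fromNullCoord, Matrix.toLin_finTwoProd_toContinuousLinearMap]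
  ext <;> simp <;> ring

lemma fromNullCoord_det : fromNullCoord.det = 1 / 2 := by
  simp only [fromNullCoord, ContinuousLinearMap.det, LinearMap.coe_toContinuousLinearMap,
    LinearMap.det_toLin, Matrix.det_fin_two_of]
  norm_num

lemma fromNullCoord_injective : Function.Injective fromNullCoord := by
  intro a b h
  simp only [fromNullCoord_apply, Prod.ext_iff] at h
  ext <;> linarith [h.1, h.2]

lemma image_fromNullCoord_Icc_prod (a b c d : ℝ) :
    fromNullCoord '' (Icc a b ×ˢ Icc c d) =
      {z : ℝ × ℝ | a ≤ z.1 + z.2 ∧ z.1 + z.2 ≤ b ∧ c ≤ z.2 - z.1 ∧ z.2 - z.1 ≤ d} := by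
  ext ⟨x, y⟩
  constructor
  · rintro ⟨q, ⟨⟨h1, h2⟩, h3, h4⟩, hq⟩
    simp only [fromNullCoord_apply, Prod.mk.injEq] at hq
    obtain ⟨rfl, rfl⟩ := hq
    refine ⟨?_, ?_, ?_, ?_⟩ <;> dsimp only <;> linarith
  · rintro ⟨h1, h2, h3, h4⟩
    refine ⟨(x + y, y - x), ⟨⟨h1, h2⟩, h3, h4⟩, ?_⟩
    simp only [fromNullCoord_apply, Prod.mk.injEq]
    constructor <;> ring

lemma setIntegral_nullCoord_rect (a b c d : ℝ) (g : ℝ × ℝ → ℝ) :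
    ∫ z in {z : ℝ × ℝ | a ≤ z.1 + z.2 ∧ z.1 + z.2 ≤ b ∧ c ≤ z.2 - z.1 ∧ z.2 - z.1 ≤ d}, g z
      = 2⁻¹ * ∫ q in Icc a b ×ˢ Icc c d, g ((q.1 - q.2) / 2, (q.1 + q.2) / 2) := by
  rw [← image_fromNullCoord_Icc_prod, integral_image_eq_integral_abs_det_fderiv_smul volume
    (measurableSet_Icc.prod measurableSet_Icc)
    (fun x _ => fromNullCoord.hasFDerivAt.hasFDerivWithinAt)
    fromNullCoord_injective.injOn g, ← integral_const_mul]
  simp only [fromNullCoord_det, fromNullCoord_apply, smul_eq_mul]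
  norm_num

lemma integral_Icc_sub_mul_sub_rpow {w v m : ℝ} (hwv : w ≤ v) (hm : -1 < m) :
    ∫ β in Icc w v, (v - β) * (β - w) ^ m = (v - w) ^ (m + 2) / ((m + 1) * (m + 2)) := by
  have hm1 : m + 1 ≠ 0 := by linarith
  have hshift := intervalIntegral.integral_comp_sub_right (a := w) (b := v)
    (fun γ => (v - w - γ) * γ ^ m) w
  simp only [sub_sub_sub_cancel_right, sub_self] at hshift
  rw [integral_Icc_eq_integral_Ioc, ← intervalIntegral.integral_of_le hwv, hshift]
  have hsplit : ∀ γ ∈ uIcc 0 (v - w), (v - w - γ) * γ ^ m = (v - w) * γ ^ m - γ ^ (m + 1) := by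
    intro γ _
    rcases eq_or_ne γ 0 with rfl | hγ
    · simp [Real.zero_rpow hm1]
    · rw [Real.rpow_add_one hγ]; ring
  rw [intervalIntegral.integral_congr hsplit, intervalIntegral.integral_sub
      ((intervalIntegral.intervalIntegrable_rpow' hm).const_mul _)
      (intervalIntegral.intervalIntegrable_rpow' (by linarith)),
    intervalIntegral.integral_const_mul, integral_rpow (Or.inl hm),
    integral_rpow (Or.inl (by linarith)), Real.zero_rpow hm1, Real.zero_rpow (by linarith),
    show m + 2 = m + 1 + 1 by ring,
    Real.rpow_add_one' (y := m + 1) (sub_nonneg.2 hwv) (by linarith)]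
  have hm2 : m + 1 + 1 ≠ 0 := by linarith
  field_simp
  ring

lemma setIntegral_Icc_prod_sub_mul_sub_rpow {w v u m : ℝ} (hwv : w ≤ v) (hvu : v ≤ u)
    (hm : -1 < m) :
    ∫ q in Icc v u ×ˢ Icc w v, (v - q.2) * (q.2 - w) ^ m
      = (u - v) * ((v - w) ^ (m + 2) / ((m + 1) * (m + 2))) := by
  have := setIntegral_prod_mul (μ := volume) (ν := volume) (fun _ : ℝ => (1 : ℝ))
    (fun β => (v - β) * (β - w) ^ m) (Icc v u) (Icc w v)
  simp only [one_mul, ← Measure.volume_eq_prod] at this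
  rw [this, integral_Icc_sub_mul_sub_rpow hwv hm]
  simp [hvu]

noncomputable def iterExponent (p : ℝ) (k : ℕ) : ℝ := 2 * (p ^ k - 1) / (p - 1)

noncomputable def iterCoeff (p C₀ : ℝ) : ℕ → ℝ
  | 0 => C₀
  | k + 1 => iterCoeff p C₀ k ^ p / (4 * (p * iterExponent p k + 1) * (p * iterExponent p k + 2))

lemma iterExponent_zero (p : ℝ) : iterExponent p 0 = 0 := by simp [iterExponent]

lemma iterExponent_succ {p : ℝ} (hp : p ≠ 1) (k : ℕ) :
    iterExponent p (k + 1) = p * iterExponent p k + 2 := by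
  have : p - 1 ≠ 0 := sub_ne_zero.2 hp
  simp only [iterExponent]
  field_simp
  ring

lemma iterExponent_nonneg {p : ℝ} (hp : 1 < p) (k : ℕ) : 0 ≤ iterExponent p k :=
  div_nonneg (by linarith [one_le_pow₀ (n := k) hp.le]) (by linarith)

lemma iterCoeff_pos {p C₀ : ℝ} (hp : 1 < p) (hC₀ : 0 < C₀) (k : ℕ) : 0 < iterCoeff p C₀ k := by
  induction k with
  | zero => exact hC₀
  | succ k ih =>
    have := iterExponent_nonneg hp k
    rw [iterCoeff]
    positivity

lemma weight_le_integrand {t₀ D a b p u v α β : ℝ} {F : ℝ → ℝ → ℝ} (ht₀ : 0 < t₀) (hD : 0 ≤ D)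
    (ha : 0 ≤ a) (hp : 0 ≤ p) (hF : β < α → D * α ^ (-a) * (β - t₀) ^ b ≤ F α β)
    (hvα : v ≤ α) (hαu : α ≤ u) (hβ : t₀ ≤ β) (hβv : β ≤ v) :
    D ^ p * u ^ (-(a * p)) * ((v - β) * (β - t₀) ^ (p * b)) ≤ (α - β) * F α β ^ p := by
  rcases hβv.trans hvα |>.eq_or_lt with hαβ | hαβ
  · have : v - β = 0 := by linarith
    rw [this, zero_mul, mul_zero, ← hαβ, sub_self, zero_mul]
  have hα : 0 < α := by linarith
  have hu : 0 < u := by linarith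
  have hβ' : 0 ≤ β - t₀ := by linarith
  have hpow : (D * α ^ (-a) * (β - t₀) ^ b) ^ p = D ^ p * α ^ (-(a * p)) * (β - t₀) ^ (p * b) := by
    rw [Real.mul_rpow (by positivity) (by positivity), Real.mul_rpow hD (by positivity),
      ← Real.rpow_mul hα.le, ← Real.rpow_mul hβ', neg_mul, mul_comm b]
  calc D ^ p * u ^ (-(a * p)) * ((v - β) * (β - t₀) ^ (p * b))
      = (v - β) * (D ^ p * u ^ (-(a * p)) * (β - t₀) ^ (p * b)) := by ring
    _ ≤ (α - β) * (D ^ p * α ^ (-(a * p)) * (β - t₀) ^ (p * b)) := by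
      gcongr ?_ * (_ * ?_ * _)
      · linarith
      · exact Real.rpow_le_rpow_of_nonpos hα hαu (neg_nonpos.2 (mul_nonneg ha hp))
    _ = (α - β) * (D * α ^ (-a) * (β - t₀) ^ b) ^ p := by rw [hpow]
    _ ≤ (α - β) * F α β ^ p := by
      gcongr
      exact hF hαβ

theorem iterCoeff_mul_rpow_le {t₀ C₀ p : ℝ} {F : ℝ → ℝ → ℝ} (ht₀ : 0 < t₀) (hC₀ : 0 < C₀)
    (hp : 1 < p)
    (hcont : ContinuousOn (fun q : ℝ × ℝ => F q.1 q.2) {q | t₀ ≤ q.2 ∧ q.2 ≤ q.1})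
    (hlow : ∀ u v, t₀ ≤ v → v < u → C₀ * u ^ (1 - p) ≤ F u v)
    (hint : ∀ u v, t₀ ≤ v → v < u →
      (4 * (u - v))⁻¹ * ∫ q in Icc v u ×ˢ Icc t₀ v, (q.1 - q.2) * F q.1 q.2 ^ p ≤ F u v)
    (k : ℕ) {u v : ℝ} (hv : t₀ ≤ v) (hvu : v < u) :
    iterCoeff p C₀ k * u ^ (-((p - 1) * p ^ k)) * (v - t₀) ^ iterExponent p k ≤ F u v := by
  induction k generalizing u v with
  | zero =>
    simpa [iterCoeff, iterExponent_zero] using hlow u v hv hvu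
  | succ k ih =>
    set D := iterCoeff p C₀ k
    set a := (p - 1) * p ^ k
    set m := p * iterExponent p k
    have hD : 0 < D := iterCoeff_pos hp hC₀ k
    have ha : 0 ≤ a := mul_nonneg (by linarith) (by positivity)
    have hm : 0 ≤ m := mul_nonneg (by linarith) (iterExponent_nonneg hp k)
    set R := Icc v u ×ˢ Icc t₀ v
    have hR : IsCompact R := isCompact_Icc.prod isCompact_Icc
    have hRsub : R ⊆ {q | t₀ ≤ q.2 ∧ q.2 ≤ q.1} := fun q ⟨⟨h₁, _⟩, h₂, h₃⟩ => ⟨h₂, h₃.trans h₁⟩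
    have hweight : IntegrableOn (fun q : ℝ × ℝ => D ^ p * u ^ (-(a * p)) *
        ((v - q.2) * (q.2 - t₀) ^ m)) R := by
      refine ContinuousOn.integrableOn_compact hR (continuousOn_const.mul ?_)
      exact (continuous_const.sub continuous_snd).continuousOn.mul
        ((continuous_snd.sub continuous_const).continuousOn.rpow_const fun _ _ => Or.inr hm)
    have hintegrand : IntegrableOn (fun q : ℝ × ℝ => (q.1 - q.2) * F q.1 q.2 ^ p) R := by
      refine ContinuousOn.integrableOn_compact hR ?_
      exact (continuous_fst.sub continuous_snd).continuousOn.mul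
        ((hcont.mono hRsub).rpow_const fun _ _ => Or.inr (by linarith))
    have hpoint : ∀ q ∈ R, D ^ p * u ^ (-(a * p)) * ((v - q.2) * (q.2 - t₀) ^ m)
        ≤ (q.1 - q.2) * F q.1 q.2 ^ p := fun q ⟨⟨h₁, h₂⟩, h₃, h₄⟩ =>
      weight_le_integrand ht₀ hD.le ha (by linarith) (ih h₃) h₁ h₂ h₃ h₄
    have hexp : -((p - 1) * p ^ (k + 1)) = -(a * p) := by ring
    have hcoeff : iterCoeff p C₀ (k + 1) = D ^ p / (4 * (m + 1) * (m + 2)) := rfl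
    have hexpo : iterExponent p (k + 1) = m + 2 := iterExponent_succ hp.ne' k
    have huv : u - v ≠ 0 := by linarith
    have hm₁ : m + 1 ≠ 0 := by linarith
    have hm₂ : m + 2 ≠ 0 := by linarith
    calc iterCoeff p C₀ (k + 1) * u ^ (-((p - 1) * p ^ (k + 1))) * (v - t₀) ^ iterExponent p (k + 1)
        = (4 * (u - v))⁻¹ * (D ^ p * u ^ (-(a * p)) *
            ((u - v) * ((v - t₀) ^ (m + 2) / ((m + 1) * (m + 2))))) := by
          rw [hcoeff, hexpo, hexp]
          field_simp
      _ = (4 * (u - v))⁻¹ * ∫ q in R, D ^ p * u ^ (-(a * p)) * ((v - q.2) * (q.2 - t₀) ^ m) := by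
          rw [integral_const_mul,
            setIntegral_Icc_prod_sub_mul_sub_rpow hv hvu.le (by linarith : -1 < m)]
      _ ≤ (4 * (u - v))⁻¹ * ∫ q in R, (q.1 - q.2) * F q.1 q.2 ^ p := by
          gcongr _ * ?_
          exact setIntegral_mono_on hweight hintegrand (measurableSet_Icc.prod measurableSet_Icc)
            hpoint
      _ ≤ F u v := hint u v hv hvu

lemma exists_mul_pow_le_of_le_mul_sub {p c₁ c₂ : ℝ} (hp : 1 < p) (hc₁ : 0 ≤ c₁) (hc₂ : 0 ≤ c₂)
    {x : ℕ → ℝ} (hx : ∀ k : ℕ, p * x k - (c₁ + c₂ * k) ≤ x (k + 1)) :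
    ∃ A, ∀ k, A * p ^ k ≤ x k := by
  have hp' : 0 < p - 1 := by linarith
  -- the affine correction `μ + ν k` absorbs the losses `c₁ + c₂ k`
  set ν := c₂ / (p - 1)
  set μ := (c₁ + ν) / (p - 1)
  have hν : 0 ≤ ν := by positivity
  have hμ : 0 ≤ μ := by positivity
  have hνμ : (p - 1) * ν = c₂ ∧ (p - 1) * μ = c₁ + ν :=
    ⟨mul_div_cancel₀ _ hp'.ne', mul_div_cancel₀ _ hp'.ne'⟩
  refine ⟨x 0 - μ, fun k => ?_⟩
  suffices h : (x 0 - μ) * p ^ k + (μ + ν * k) ≤ x k by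
    have : 0 ≤ ν * k := by positivity
    linarith
  induction k with
  | zero => simp
  | succ k ih =>
    have h := mul_le_mul_of_nonneg_left ih (by linarith : (0 : ℝ) ≤ p)
    push_cast
    linear_combination hx k + h - (k : ℝ) * hνμ.1 - hνμ.2

lemma iterExponent_le {p : ℝ} (hp : 1 < p) (k : ℕ) : iterExponent p k ≤ 2 * p ^ k / (p - 1) :=
  div_le_div_of_nonneg_right (by linarith) (by linarith)

lemma log_iterCoeff_succ {p C₀ : ℝ} (hp : 1 < p) (hC₀ : 0 < C₀) (k : ℕ) :
    Real.log (iterCoeff p C₀ (k + 1)) = p * Real.log (iterCoeff p C₀ k)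
      - Real.log (4 * (p * iterExponent p k + 1) * (p * iterExponent p k + 2)) := by
  have := iterExponent_nonneg hp k
  have := iterCoeff_pos hp hC₀ k
  rw [iterCoeff, Real.log_div (by positivity) (by positivity), Real.log_rpow this]

lemma exists_exp_mul_pow_le_iterCoeff {p C₀ : ℝ} (hp : 1 < p) (hC₀ : 0 < C₀) :
    ∃ A, ∀ k, Real.exp (A * p ^ k) ≤ iterCoeff p C₀ k := by
  suffices h : ∃ A, ∀ k, A * p ^ k ≤ Real.log (iterCoeff p C₀ k) by
    obtain ⟨A, hA⟩ := h
    exact ⟨A, fun k => (Real.exp_le_exp.2 (hA k)).trans_eq (Real.exp_log (iterCoeff_pos hp hC₀ k))⟩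
  set c := 4 * (2 * p / (p - 1)) ^ 2
  have hp' : 0 < p - 1 := by linarith
  have hc : 1 ≤ c := by
    have : 1 ≤ 2 * p / (p - 1) := by rw [le_div_iff₀ hp']; linarith
    nlinarith
  refine exists_mul_pow_le_of_le_mul_sub hp (Real.log_nonneg hc)
    (Real.log_nonneg (one_le_pow₀ hp.le : 1 ≤ p ^ 2)) fun k => ?_
  have hb := iterExponent_nonneg hp k
  have hbound : 4 * (p * iterExponent p k + 1) * (p * iterExponent p k + 2) ≤ c * (p ^ 2) ^ k := by
    have h : p * iterExponent p k + 2 ≤ 2 * p / (p - 1) * p ^ k := by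
      calc p * iterExponent p k + 2 = iterExponent p (k + 1) := (iterExponent_succ hp.ne' k).symm
        _ ≤ 2 * p ^ (k + 1) / (p - 1) := iterExponent_le hp (k + 1)
        _ = 2 * p / (p - 1) * p ^ k := by ring
    have h0 : 0 ≤ p * iterExponent p k := by positivity
    calc 4 * (p * iterExponent p k + 1) * (p * iterExponent p k + 2)
        ≤ 4 * (2 * p / (p - 1) * p ^ k) * (2 * p / (p - 1) * p ^ k) := by gcongr; linarith
      _ = c * (p ^ 2) ^ k := by ring
  have hlog : Real.log (4 * (p * iterExponent p k + 1) * (p * iterExponent p k + 2))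
      ≤ Real.log c + Real.log (p ^ 2) * k := by
    calc _ ≤ Real.log (c * (p ^ 2) ^ k) := Real.log_le_log (by positivity) hbound
      _ = Real.log c + Real.log (p ^ 2) * k := by
        rw [Real.log_mul (by positivity) (by positivity), Real.log_pow, mul_comm]
  rw [log_iterCoeff_succ hp hC₀]
  linarith

lemma tendsto_mul_rpow_iterExponent_atTop {p A u w : ℝ} {D : ℕ → ℝ} (hp : 1 < p) (hu : 0 < u)
    (hw : 0 < w)
    (hD : ∀ k, Real.exp (A * p ^ k) ≤ D k)
    (hrate : 0 < A - (p - 1) * Real.log u + 2 / (p - 1) * Real.log w) :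
    Tendsto (fun k => D k * u ^ (-((p - 1) * p ^ k)) * w ^ iterExponent p k) atTop atTop := by
  set γ := A - (p - 1) * Real.log u + 2 / (p - 1) * Real.log w with hγ
  have hp' : p - 1 ≠ 0 := by linarith
  have hbound : ∀ k : ℕ, Real.exp (γ * p ^ k + -(2 / (p - 1) * Real.log w))
      ≤ D k * u ^ (-((p - 1) * p ^ k)) * w ^ iterExponent p k := by
    intro k
    rw [Real.rpow_def_of_pos hu, Real.rpow_def_of_pos hw]
    calc Real.exp (γ * p ^ k + -(2 / (p - 1) * Real.log w))
        = Real.exp (A * p ^ k) * Real.exp (Real.log u * -((p - 1) * p ^ k))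
            * Real.exp (Real.log w * iterExponent p k) := by
          rw [← Real.exp_add, ← Real.exp_add, iterExponent, hγ]
          congr 1
          field_simp
          ring
      _ ≤ _ := by gcongr; exact hD k
  refine tendsto_atTop_mono hbound (Real.tendsto_exp_atTop.comp ?_)
  exact tendsto_atTop_add_const_right _ _
    ((tendsto_pow_atTop_atTop_of_one_lt hp).const_mul_atTop hrate)

lemma eventually_growthRate_pos {p : ℝ} (hp₁ : 1 < p) (hp₂ : p < 1 + √2) (A : ℝ) :
    ∀ᶠ u in atTop, 0 < A - (p - 1) * Real.log u + 2 / (p - 1) * Real.log (u / 4) := by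
  have hp : 0 < p - 1 := by linarith
  have hε : 0 < 2 / (p - 1) - (p - 1) := by
    have : (p - 1) ^ 2 < 2 := by
      simpa using pow_lt_pow_left₀ (by linarith : p - 1 < √2) hp.le two_ne_zero
    rw [sub_pos, lt_div_iff₀ hp]
    nlinarith
  have hlim : Tendsto (fun u => A - 2 / (p - 1) * Real.log 4
      + (2 / (p - 1) - (p - 1)) * Real.log u) atTop atTop :=
    tendsto_atTop_add_const_left _ _ (Real.tendsto_log_atTop.const_mul_atTop hε)
  filter_upwards [hlim.eventually_gt_atTop 0, eventually_gt_atTop 0] with u hrate hu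
  rw [Real.log_div hu.ne' (by norm_num)]
  linarith

lemma integral_nullCoord_le {t₀ p : ℝ} {f : ℝ → ℝ → ℝ}
    (hint : ∀ r t, 0 < r → r ≤ t - t₀ →
      f r t ≥ ∫ z in {z : ℝ × ℝ | t - r ≤ z.1 + z.2 ∧ z.1 + z.2 ≤ t + r ∧
          t₀ ≤ z.2 - z.1 ∧ z.2 - z.1 ≤ t - r}, z.1 / (2 * r) * f z.1 z.2 ^ p)
    {u v : ℝ} (hv : t₀ ≤ v) (hvu : v < u) :
    (4 * (u - v))⁻¹ * ∫ q in Icc v u ×ˢ Icc t₀ v,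
        (q.1 - q.2) * f ((q.1 - q.2) / 2) ((q.1 + q.2) / 2) ^ p
      ≤ f ((u - v) / 2) ((u + v) / 2) := by
  have h := hint ((u - v) / 2) ((u + v) / 2) (by linarith) (by linarith)
  rw [setIntegral_nullCoord_rect, show (u + v) / 2 - (u - v) / 2 = v by ring,
    show (u + v) / 2 + (u - v) / 2 = u by ring] at h
  have huv : u - v ≠ 0 := by linarith
  have hweight : ∀ q : ℝ × ℝ, (q.1 - q.2) / 2 / (2 * ((u - v) / 2))
      = 2 * (4 * (u - v))⁻¹ * (q.1 - q.2) := fun q => by field_simp; ring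
  simp only [hweight, mul_assoc, integral_const_mul] at h
  convert h using 1
  ring

theorem stmt_14_general (tstar C0 p : ℝ) (htstar : 0 < tstar) (hC0 : 0 < C0)
    (hp1 : 1 < p) (hp2 : p < 1 + Real.sqrt 2) (ubar : ℝ → ℝ → ℝ)
    (hcont : ContinuousOn (fun z : ℝ × ℝ => ubar z.1 z.2)
      {z : ℝ × ℝ | 0 ≤ z.1 ∧ z.1 ≤ z.2 - tstar})
    (hlow : ∀ r t, 0 < r → r ≤ t - tstar → ubar r t ≥ C0 * (t + r) ^ (1 - p))
    (hint : ∀ r t, 0 < r → r ≤ t - tstar →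
      ubar r t ≥ ∫ z in {z : ℝ × ℝ | t - r ≤ z.1 + z.2 ∧ z.1 + z.2 ≤ t + r ∧
          tstar ≤ z.2 - z.1 ∧ z.2 - z.1 ≤ t - r},
        z.1 / (2 * r) * ubar z.1 z.2 ^ p) :
    False := by
  set F : ℝ → ℝ → ℝ := fun u v => ubar ((u - v) / 2) ((u + v) / 2)
  have hFcont : ContinuousOn (fun q : ℝ × ℝ => F q.1 q.2) {q | tstar ≤ q.2 ∧ q.2 ≤ q.1} :=
    hcont.comp (f := fun q : ℝ × ℝ => ((q.1 - q.2) / 2, (q.1 + q.2) / 2)) (by fun_prop)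
      fun q ⟨h₁, h₂⟩ => ⟨by dsimp only; linarith, by dsimp only; linarith⟩
  have hFlow : ∀ u v, tstar ≤ v → v < u → C0 * u ^ (1 - p) ≤ F u v := fun u v hv hvu => by
    have h := hlow ((u - v) / 2) ((u + v) / 2) (by linarith) (by linarith)
    rwa [show (u + v) / 2 + (u - v) / 2 = u by ring] at h
  have hbound := iterCoeff_mul_rpow_le htstar hC0 hp1 hFcont hFlow
    (fun u v hv hvu => integral_nullCoord_le hint hv hvu)
  obtain ⟨A, hA⟩ := exists_exp_mul_pow_le_iterCoeff hp1 hC0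
  obtain ⟨u, hrate, hu⟩ :=
    ((eventually_growthRate_pos hp1 hp2 A).and (eventually_gt_atTop (4 * tstar / 3))).exists
  obtain ⟨k, hk⟩ := ((tendsto_mul_rpow_iterExponent_atTop hp1 (by linarith) (by linarith) hA
    hrate).eventually_gt_atTop (F u (u / 4 + tstar))).exists
  have hle := hbound k (u := u) (v := u / 4 + tstar) (by linarith) (by linarith)
  rw [add_sub_cancel_right] at hle
  linarith

theorem stmt_14 (tstar C0 p : ℝ) (htstar : 0 < tstar) (hC0 : 0 < C0)
    (hp1 : 1 < p) (hp2 : p < 1 + Real.sqrt 2) (ubar : ℝ → ℝ → ℝ)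
    (hcont : ContinuousOn (fun z : ℝ × ℝ => ubar z.1 z.2)
      {z : ℝ × ℝ | 0 ≤ z.1 ∧ z.1 ≤ z.2 - tstar})
    (hnonneg : ∀ r t, 0 ≤ r → r ≤ t - tstar → 0 ≤ ubar r t)
    (hlow : ∀ r t, 0 < r → r ≤ t - tstar → ubar r t ≥ C0 * (t + r) ^ (1 - p))
    (hint : ∀ r t, 0 < r → r ≤ t - tstar →
      ubar r t ≥ ∫ z in {z : ℝ × ℝ | t - r ≤ z.1 + z.2 ∧ z.1 + z.2 ≤ t + r ∧
          tstar ≤ z.2 - z.1 ∧ z.2 - z.1 ≤ t - r},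
        z.1 / (2 * r) * ubar z.1 z.2 ^ p) :
    False :=
  stmt_14_general tstar C0 p htstar hC0 hp1 hp2 ubar hcont hlow hint
end
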